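/- Let ψ : ℝ → ℝ ∪ {∞} be a proper lower semicontinuous convex function with dom(ψ) ⊂ [0,∞), superlinear growth, and let α = inf dom(ψ). Assume d₊ψ(α) > -∞ (in particular α ∈ dom(ψ)). Then the function h(τ) = max{s ∈ dom(ψ) : τ ∈ ∂ψ(s)} is differentiable at τ₀ = d₊ψ(α) if and only if lim_{s↘α} (d₊ψ(s) - d₊ψ(α))/(s - α) = +∞. -/

import Mathlib

open Set Filter Topology

/-- The subdifferential of `ψ` (with domain `D`) at `s`. -/
def subdiffAt (D : Set ℝ) (ψ : ℝ → ℝ) (s : ℝ) : Set ℝ :=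
  {τ : ℝ | ∀ t ∈ D, τ * (t - s) ≤ ψ t - ψ s}

/-- The right derivative `d₊ψ(s)` as an extended real. -/
noncomputable def dPlus (D : Set ℝ) (ψ : ℝ → ℝ) (s : ℝ) : EReal :=
  sInf ((fun t => (((ψ t - ψ s) / (t - s) : ℝ) : EReal)) '' (D ∩ Set.Ioi s))

section Helpers

variable {D : Set ℝ} {ψ : ℝ → ℝ}

lemma dPlus_le_slope {s t : ℝ} (htD : t ∈ D) (hst : s < t) :
    dPlus D ψ s ≤ (((ψ t - ψ s) / (t - s) : ℝ) : EReal) :=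
  sInf_le ⟨t, ⟨htD, hst⟩, rfl⟩

lemma le_dPlus {s : ℝ} {c : EReal}
    (H : ∀ t ∈ D, s < t → c ≤ (((ψ t - ψ s) / (t - s) : ℝ) : EReal)) :
    c ≤ dPlus D ψ s :=
  le_sInf (by rintro x ⟨t, ⟨htD, hst⟩, rfl⟩; exact H t htD hst)

lemma subdiff_le_slope {τ s t : ℝ} (hτ : τ ∈ subdiffAt D ψ s) (htD : t ∈ D) (hst : s < t) :
    τ ≤ (ψ t - ψ s) / (t - s) := by
  have h1 : τ * (t - s) ≤ ψ t - ψ s := hτ t htD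
  rw [le_div_iff₀ (by linarith)]
  exact h1

lemma slope_le_subdiff {τ s t : ℝ} (hτ : τ ∈ subdiffAt D ψ s) (htD : t ∈ D) (hts : t < s) :
    (ψ s - ψ t) / (s - t) ≤ τ := by
  have h1 : τ * (t - s) ≤ ψ t - ψ s := hτ t htD
  rw [div_le_iff₀ (by linarith)]
  nlinarith

end Helpers

/-- With `ψ` proper lsc convex, superlinear, `dom ψ = D ⊆ [0,∞)`,
`α = inf D ∈ D` and `d₊ψ(α)` finite (equal to the real number `τ₀`), the function
`h(τ) = max{s ∈ D : τ ∈ ∂ψ(s)}` is differentiable at `τ₀ = d₊ψ(α)` iff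
`lim_{s↘α} (d₊ψ(s) - d₊ψ(α))/(s - α) = +∞`. -/
theorem h_differentiable_at_iff
    (D : Set ℝ) (ψ : ℝ → ℝ)
    (hD : D ⊆ Set.Ici (0 : ℝ))
    (hint : Convex ℝ D)
    (hne : ∃ a ∈ D, ∃ b ∈ D, a ≠ b)
    (hconv : ConvexOn ℝ D ψ)
    (hlsc : LowerSemicontinuousOn ψ D)
    (hsl : Tendsto (fun s => ψ s / s) (atTop ⊓ Filter.principal D) atTop)
    (α : ℝ) (hα : α = sInf D) (hαD : α ∈ D)
    (τ₀ : ℝ) (hτ₀ : (τ₀ : EReal) = dPlus D ψ α)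
    (h : ℝ → ℝ)
    (hh : ∀ τ : ℝ, IsGreatest {s : ℝ | s ∈ D ∧ τ ∈ subdiffAt D ψ s} (h τ)) :
    DifferentiableAt ℝ h τ₀ ↔
      Tendsto (fun s : ℝ => ((((s - α)⁻¹ : ℝ)) : EReal) * (dPlus D ψ s - (τ₀ : EReal)))
        (𝓝[D ∩ Set.Ioi α] α) (𝓝 ⊤) := by
  -- ### basic setup
  have hbdd : BddBelow D := ⟨0, fun x hx => hD hx⟩
  have hαle : ∀ s ∈ D, α ≤ s := fun s hs => hα ▸ csInf_le hbdd hs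
  obtain ⟨b, hbD, hαb⟩ : ∃ b ∈ D, α < b := by
    obtain ⟨a, haD, b0, hb0D, hab⟩ := hne
    rcases lt_or_gt_of_ne hab with h' | h'
    · exact ⟨b0, hb0D, lt_of_le_of_lt (hαle a haD) h'⟩
    · exact ⟨a, haD, lt_of_le_of_lt (hαle b0 hb0D) h'⟩
  have hIcc : ∀ c ∈ D, Icc α c ⊆ D := fun c hc => hint.ordConnected.out hαD hc
  have hNeBot : (𝓝[D ∩ Set.Ioi α] α).NeBot := by
    have hsub : Ioc α b ⊆ D ∩ Set.Ioi α := fun x hx =>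
      ⟨hIcc b hbD ⟨le_of_lt hx.1, hx.2⟩, hx.1⟩
    have h1 : (𝓝[Ioc α b] α).NeBot := by
      rw [← mem_closure_iff_nhdsWithin_neBot, closure_Ioc (ne_of_lt hαb)]
      exact ⟨le_refl α, le_of_lt hαb⟩
    exact h1.mono (nhdsWithin_mono α hsub)
  -- slopes from α are ≥ τ₀
  have hτ₀_le_slope : ∀ t ∈ D, α < t → τ₀ ≤ (ψ t - ψ α) / (t - α) := by
    intro t ht hαt
    have := hτ₀ ▸ dPlus_le_slope (ψ := ψ) ht hαt
    exact_mod_cast this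
  -- three-slope monotonicity
  have hslope3 : ∀ x ∈ D, ∀ z ∈ D, ∀ y : ℝ, x < y → y < z →
      (ψ y - ψ x) / (y - x) ≤ (ψ z - ψ y) / (z - y) := fun x hx z hz y hxy hyz =>
    hconv.slope_mono_adjacent hx hz hxy hyz
  -- h basics
  have hhD : ∀ τ, h τ ∈ D := fun τ => (hh τ).1.1
  have hhsub : ∀ τ, τ ∈ subdiffAt D ψ (h τ) := fun τ => (hh τ).1.2
  have hαh : ∀ τ, α ≤ h τ := fun τ => hαle _ (hhD τ)
  -- τ₀ ≤ d₊ψ(s) for s ∈ D, s > α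
  have hK6 : ∀ s ∈ D, α < s → (τ₀ : EReal) ≤ dPlus D ψ s := by
    intro s hs hαs
    apply le_dPlus
    intro t ht hst
    have h1 : (ψ s - ψ α) / (s - α) ≤ (ψ t - ψ s) / (t - s) := hslope3 α hαD t ht s hαs hst
    exact_mod_cast le_trans (hτ₀_le_slope s hs hαs) h1
  -- finite representation of d₊ψ(s) when there is a point of D above s
  have hrep : ∀ s ∈ D, α < s → ∀ t ∈ D, s < t →
      ∃ g : ℝ, dPlus D ψ s = (g : EReal) ∧ τ₀ ≤ g ∧ g ≤ (ψ t - ψ s) / (t - s) := by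
    intro s hs hαs t ht hst
    have hub : dPlus D ψ s ≤ (((ψ t - ψ s) / (t - s) : ℝ) : EReal) := dPlus_le_slope ht hst
    have hlb : (τ₀ : EReal) ≤ dPlus D ψ s := hK6 s hs hαs
    have hne_top : dPlus D ψ s ≠ ⊤ := fun hc => by
      rw [hc] at hub; exact (not_le.2 (EReal.coe_lt_top _)) hub
    have hne_bot : dPlus D ψ s ≠ ⊥ := fun hc => by
      rw [hc] at hlb; exact (not_le.2 (EReal.bot_lt_coe _)) hlb
    refine ⟨(dPlus D ψ s).toReal, (EReal.coe_toReal hne_top hne_bot).symm, ?_, ?_⟩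
    · exact_mod_cast (EReal.coe_toReal hne_top hne_bot) ▸ hlb
    · exact_mod_cast (EReal.coe_toReal hne_top hne_bot) ▸ hub
  -- K1 : if h τ < s with s ∈ D then τ ≤ d₊ψ(s)
  have hK1 : ∀ τ : ℝ, ∀ s ∈ D, h τ < s → (τ : EReal) ≤ dPlus D ψ s := by
    intro τ s hs hlt
    apply le_dPlus
    intro t ht hst
    have h1 : τ ≤ (ψ s - ψ (h τ)) / (s - h τ) := subdiff_le_slope (hhsub τ) hs hlt
    have h2 : (ψ s - ψ (h τ)) / (s - h τ) ≤ (ψ t - ψ s) / (t - s) :=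
      hslope3 (h τ) (hhD τ) t ht s hlt hst
    exact_mod_cast le_trans h1 h2
  -- K2 : h τ = α for τ < τ₀
  have hK2 : ∀ τ : ℝ, τ < τ₀ → h τ = α := by
    intro τ hτ
    refine le_antisymm ?_ (hαh τ)
    by_contra hc
    have hαhτ : α < h τ := not_le.mp hc
    have h1 : (ψ (h τ) - ψ α) / (h τ - α) ≤ τ := slope_le_subdiff (hhsub τ) hαD hαhτ
    have h2 : τ₀ ≤ (ψ (h τ) - ψ α) / (h τ - α) := hτ₀_le_slope _ (hhD τ) hαhτ
    linarith
  -- under RHS : h τ₀ = α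
  have hRHS_imp : Tendsto (fun s : ℝ => ((((s - α)⁻¹ : ℝ)) : EReal) * (dPlus D ψ s - (τ₀ : EReal)))
      (𝓝[D ∩ Set.Ioi α] α) (𝓝 ⊤) → h τ₀ = α := by
    intro hT
    by_contra hc
    have hc' : α < h τ₀ := lt_of_le_of_ne (hαh τ₀) (Ne.symm hc)
    have h1 := (EReal.tendsto_nhds_top_iff_real.mp hT) 0
    have h2 : ∀ᶠ s in 𝓝[D ∩ Set.Ioi α] α, s < h τ₀ :=
      eventually_nhdsWithin_of_eventually_nhds (eventually_lt_nhds hc')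
    have h3 : ∀ᶠ s in 𝓝[D ∩ Set.Ioi α] α, s ∈ D ∩ Set.Ioi α := eventually_mem_nhdsWithin
    obtain ⟨s, ⟨hs1, hs2⟩, hs3⟩ := ((h1.and h2).and h3).exists
    obtain ⟨g, hg, hg1, hg2⟩ := hrep s hs3.1 hs3.2 (h τ₀) (hhD τ₀) hs2
    have h4 : (ψ (h τ₀) - ψ s) / (h τ₀ - s) ≤ τ₀ := slope_le_subdiff (hhsub τ₀) hs3.1 hs2
    have h5 : g = τ₀ := le_antisymm (le_trans hg2 h4) hg1
    rw [hg, h5] at hs1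
    have : ((0 : ℝ) : EReal) < ((((s - α)⁻¹ * (τ₀ - τ₀)) : ℝ) : EReal) := by
      rw [EReal.coe_mul, EReal.coe_sub]; exact hs1
    rw [EReal.coe_lt_coe_iff] at this
    simp at this
  -- under RHS : eventual upper bound for h near τ₀ from the right
  have hEv1 : Tendsto (fun s : ℝ => ((((s - α)⁻¹ : ℝ)) : EReal) * (dPlus D ψ s - (τ₀ : EReal)))
      (𝓝[D ∩ Set.Ioi α] α) (𝓝 ⊤) → ∀ δ > (0:ℝ), ∀ᶠ τ in 𝓝[>] τ₀, h τ < α + δ := by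
    intro hT δ hδ
    have h1 := (EReal.tendsto_nhds_top_iff_real.mp hT) 0
    have h2 : ∀ᶠ s in 𝓝[D ∩ Set.Ioi α] α, s < min (α + δ) b :=
      eventually_nhdsWithin_of_eventually_nhds
        (eventually_lt_nhds (lt_min (by linarith) hαb))
    have h3 : ∀ᶠ s in 𝓝[D ∩ Set.Ioi α] α, s ∈ D ∩ Set.Ioi α := eventually_mem_nhdsWithin
    obtain ⟨s, ⟨hs1, hs2⟩, hs3⟩ := ((h1.and h2).and h3).exists
    obtain ⟨g, hg, hg1, hg2⟩ := hrep s hs3.1 hs3.2 b hbD (lt_of_lt_of_le hs2 (min_le_right _ _))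
    have hgτ₀ : τ₀ < g := by
      rw [hg, ← EReal.coe_sub, ← EReal.coe_mul, EReal.coe_lt_coe_iff] at hs1
      rcases lt_or_ge τ₀ g with h' | h'
      · exact h'
      · exfalso
        have hsα : (0:ℝ) < s - α := by have := hs3.2; simp at this; linarith
        nlinarith [inv_pos.mpr hsα]
    have hmem : Ioo τ₀ g ∈ 𝓝[>] τ₀ := Ioo_mem_nhdsGT_of_mem ⟨le_refl _, hgτ₀⟩
    filter_upwards [hmem] with τ hτ
    have hhτ : h τ ≤ s := by
      by_contra hcc
      push_neg at hcc
      have h4 : (ψ (h τ) - ψ s) / (h τ - s) ≤ τ := slope_le_subdiff (hhsub τ) hs3.1 hcc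
      have h5 : dPlus D ψ s ≤ (((ψ (h τ) - ψ s) / (h τ - s) : ℝ) : EReal) :=
        dPlus_le_slope (hhD τ) hcc
      rw [hg, EReal.coe_le_coe_iff] at h5
      have := hτ.2
      linarith
    calc h τ ≤ s := hhτ
    _ < α + δ := lt_of_lt_of_le hs2 (min_le_left _ _)
  -- under RHS : quantitative bound
  have hEv2 : Tendsto (fun s : ℝ => ((((s - α)⁻¹ : ℝ)) : EReal) * (dPlus D ψ s - (τ₀ : EReal)))
      (𝓝[D ∩ Set.Ioi α] α) (𝓝 ⊤) →
      ∀ M > (0:ℝ), ∀ᶠ τ in 𝓝[>] τ₀, h τ - α ≤ (τ - τ₀) / M := by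
    intro hT M hM
    have h1 := (EReal.tendsto_nhds_top_iff_real.mp hT) M
    rw [eventually_iff, Metric.mem_nhdsWithin_iff] at h1
    obtain ⟨δ₁, hδ₁, hball⟩ := h1
    filter_upwards [hEv1 hT δ₁ hδ₁, eventually_mem_nhdsWithin] with τ hτ1 hτ2
    have hττ₀ : τ₀ < τ := hτ2
    by_contra hcc
    push_neg at hcc
    have hq : (0:ℝ) < (τ - τ₀) / M := div_pos (by linarith) hM
    obtain ⟨s', hs'1, hs'2⟩ := exists_between (show α + (τ - τ₀) / M < h τ by linarith)
    have hαs' : α < s' := by linarith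
    have hs'D : s' ∈ D := hIcc (h τ) (hhD τ) ⟨le_of_lt hαs', le_of_lt hs'2⟩
    have hs'mem : s' ∈ Metric.ball α δ₁ ∩ (D ∩ Set.Ioi α) := by
      refine ⟨?_, hs'D, hαs'⟩
      rw [Metric.mem_ball, Real.dist_eq, abs_of_pos (by linarith)]
      linarith
    have hprod := hball hs'mem
    simp only [Set.mem_setOf_eq] at hprod
    obtain ⟨g, hg, hg1, hg2⟩ := hrep s' hs'D hαs' (h τ) (hhD τ) (by linarith)
    rw [hg, ← EReal.coe_sub, ← EReal.coe_mul, EReal.coe_lt_coe_iff] at hprod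
    have h4 : (ψ (h τ) - ψ s') / (h τ - s') ≤ τ := slope_le_subdiff (hhsub τ) hs'D (by linarith)
    have h5 : g ≤ τ := le_trans hg2 h4
    have hsα : (0:ℝ) < s' - α := by linarith
    have h6 : M * (s' - α) < g - τ₀ := by
      rw [mul_comm]
      rw [inv_mul_eq_div, lt_div_iff₀ hsα] at hprod
      linarith
    have h7 : M * (s' - α) > M * ((τ - τ₀)/M) :=
      mul_lt_mul_of_pos_left (by linarith) hM
    rw [mul_div_cancel₀ _ (ne_of_gt hM)] at h7
    linarith
  -- under RHS : right slope of h tends to 0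
  have hslope_right : Tendsto (fun s : ℝ => ((((s - α)⁻¹ : ℝ)) : EReal) * (dPlus D ψ s - (τ₀ : EReal)))
      (𝓝[D ∩ Set.Ioi α] α) (𝓝 ⊤) →
      Tendsto (fun τ => (h τ - α) / (τ - τ₀)) (𝓝[>] τ₀) (𝓝 (0:ℝ)) := by
    intro hT
    rw [tendsto_order]
    constructor
    · intro c hc
      filter_upwards [eventually_mem_nhdsWithin] with τ hτ
      have hττ₀ : τ₀ < τ := hτ
      have : (0:ℝ) ≤ (h τ - α) / (τ - τ₀) :=
        div_nonneg (by linarith [hαh τ]) (by linarith)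
      linarith
    · intro c hc
      filter_upwards [hEv2 hT (2/c) (by positivity), eventually_mem_nhdsWithin] with τ hτ1 hτ2
      have hττ₀ : τ₀ < τ := hτ2
      rw [div_lt_iff₀ (by linarith)]
      have h9 : (τ - τ₀) / (2/c) = (τ - τ₀) * c / 2 := div_div_eq_mul_div _ _ _
      nlinarith [hτ1, h9]
  constructor
  · -- differentiable ⟹ RHS
    intro hdiff
    have hcont := hdiff.continuousAt
    have hleft : Tendsto h (𝓝[<] τ₀) (𝓝 (h τ₀)) := (hcont.continuousWithinAt).tendsto
    have hconstl : Tendsto h (𝓝[<] τ₀) (𝓝 α) := by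
      apply Tendsto.congr' _ tendsto_const_nhds
      filter_upwards [eventually_mem_nhdsWithin] with τ hτ
      exact (hK2 τ hτ).symm
    have hτ₀α : h τ₀ = α := tendsto_nhds_unique hleft hconstl
    have hd : HasDerivAt h (deriv h τ₀) τ₀ := hdiff.hasDerivAt
    have hslopeT := hasDerivAt_iff_tendsto_slope.mp hd
    have hslopel : Tendsto (slope h τ₀) (𝓝[<] τ₀) (𝓝 (deriv h τ₀)) :=
      hslopeT.mono_left (nhdsWithin_mono _ (fun x hx => ne_of_lt hx))
    have hslopel0 : Tendsto (slope h τ₀) (𝓝[<] τ₀) (𝓝 (0:ℝ)) := by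
      apply Tendsto.congr' _ tendsto_const_nhds
      filter_upwards [eventually_mem_nhdsWithin] with τ hτ
      rw [slope_def_field, hK2 τ hτ, hτ₀α, sub_self, zero_div]
    have hderiv0 : deriv h τ₀ = 0 := tendsto_nhds_unique hslopel hslopel0
    have hsr : Tendsto (fun τ => (h τ - α) / (τ - τ₀)) (𝓝[>] τ₀) (𝓝 (0:ℝ)) := by
      have := hslopeT.mono_left (nhdsWithin_mono _ (fun x (hx : τ₀ < x) => ne_of_gt hx))
      rw [hderiv0] at this
      apply this.congr
      intro τ
      rw [slope_def_field, hτ₀α]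
    rw [EReal.tendsto_nhds_top_iff_real]
    intro M
    set M₀ : ℝ := max M 0 + 1 with hM₀def
    have hM₀ : 0 < M₀ := by positivity
    have hMM₀ : M < M₀ := by
      have := le_max_left M 0
      rw [hM₀def]
      linarith
    have hev := hsr.eventually (eventually_lt_nhds (show (0:ℝ) < (2*M₀)⁻¹ by positivity))
    rw [(nhdsGT_basis τ₀).eventually_iff] at hev
    obtain ⟨u, hu, hslopeu⟩ := hev
    have hr : (0:ℝ) < (u - τ₀) / (2*M₀) := by
      have : (0:ℝ) < u - τ₀ := by linarith
      positivity
    have h2 : ∀ᶠ s in 𝓝[D ∩ Set.Ioi α] α, s < min (α + (u - τ₀) / (2*M₀)) b :=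
      eventually_nhdsWithin_of_eventually_nhds
        (eventually_lt_nhds (lt_min (by linarith) hαb))
    filter_upwards [h2, eventually_mem_nhdsWithin] with s hs1 hs2
    have hsD : s ∈ D := hs2.1
    have hαs : α < s := hs2.2
    have hsb : s < b := lt_of_lt_of_le hs1 (min_le_right _ _)
    have hsδ : s - α < (u - τ₀) / (2*M₀) := by
      have := lt_of_lt_of_le hs1 (min_le_left _ _); linarith
    set τ : ℝ := τ₀ + 2*M₀*(s - α) with hτdef
    have hττ₀ : τ₀ < τ := by
      have h8 : (0:ℝ) < 2*M₀*(s-α) := mul_pos (by positivity) (by linarith)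
      simp only [hτdef]
      linarith
    have hτu : τ < u := by
      rw [lt_div_iff₀ (by positivity)] at hsδ
      simp only [hτdef]
      nlinarith
    have hslopeτ : (h τ - α) / (τ - τ₀) < (2*M₀)⁻¹ := hslopeu ⟨hττ₀, hτu⟩
    have hhτs : h τ < s := by
      rw [div_lt_iff₀ (by linarith)] at hslopeτ
      have : τ - τ₀ = 2*M₀*(s - α) := by simp [hτdef]
      rw [this] at hslopeτ
      have h9 : (2*M₀)⁻¹ * (2*M₀*(s-α)) = s - α := by field_simp
      rw [h9] at hslopeτ
      linarith
    have hK := hK1 τ s hsD hhτs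
    obtain ⟨g, hg, hg1, hg2⟩ := hrep s hsD hαs b hbD hsb
    rw [hg, EReal.coe_le_coe_iff] at hK
    rw [hg, ← EReal.coe_sub, ← EReal.coe_mul, EReal.coe_lt_coe_iff]
    have hsα : (0:ℝ) < s - α := by linarith
    have h6 : 2*M₀ ≤ (s - α)⁻¹ * (g - τ₀) := by
      rw [inv_mul_eq_div, le_div_iff₀ hsα]
      have : τ - τ₀ = 2*M₀*(s - α) := by simp [hτdef]
      linarith [hK, this ▸ (le_refl (τ - τ₀))]
    linarith
  · -- RHS ⟹ differentiable
    intro hT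
    have hτ₀α : h τ₀ = α := hRHS_imp hT
    have hsr := hslope_right hT
    have hd : HasDerivAt h 0 τ₀ := by
      rw [hasDerivAt_iff_tendsto_slope, ← nhdsLT_sup_nhdsGT τ₀]
      apply Tendsto.sup
      · apply Tendsto.congr' _ tendsto_const_nhds
        filter_upwards [eventually_mem_nhdsWithin] with τ hτ
        rw [slope_def_field, hK2 τ hτ, hτ₀α, sub_self, zero_div]
      · apply Tendsto.congr' _ hsr
        filter_upwards with τ
        rw [slope_def_field, hτ₀α]
    exact hd.differentiableAt
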